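/- arXiv:0912.3728 — 3 statements merged into one kernel-verified Lean document; each statement's English description precedes it below -/
import Mathlib

section
/- For N ≥ m ≥ 1, |Π₀({1,...,2m},{1,...,N})| = C(N,m) · |Π₀({1,...,2m},{1,...,m})|, where C(N,m) is the binomial coefficient. -/
/-- `s'` is adjacent to `s` in a linear order: no element lies strictly between them. -/
def Adj {α : Type*} [LinearOrder α] (s s' : α) : Prop := s ⋖ s' ∨ s' ⋖ s

/-- `s` is a peak of `f`: `f s` exceeds `f s'` for every `s'` adjacent to `s`. -/
def IsPeak {α : Type*} {β : Type*} [LinearOrder α] [LinearOrder β]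
    (f : α → β) (s : α) : Prop := ∀ s', Adj s s' → f s' < f s

/-- All fibers of `f` have cardinality 0 or 2 (a pair partition). -/
def IsPairPartition {n N : ℕ} (f : Fin n → Fin N) : Prop :=
  ∀ t, (Finset.univ.filter fun s => f s = t).card = 2 ∨
       (Finset.univ.filter fun s => f s = t).card = 0

/-- `f` is peakless: it has no peak. -/
def Peakless {α β : Type*} [LinearOrder α] [LinearOrder β] (f : α → β) : Prop :=
  ¬ ∃ s, IsPeak f s

open Finset

lemma image_card_aux {m N : ℕ} (f : Fin (2 * m) → Fin N) (hf : IsPairPartition f) :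
    (Finset.image f Finset.univ).card = m := by
  have h : (Finset.univ : Finset (Fin (2 * m))).card
      = ∑ t ∈ Finset.image f Finset.univ, (Finset.univ.filter fun s => f s = t).card :=
    Finset.card_eq_sum_card_fiberwise (fun s _ => Finset.mem_image_of_mem f (Finset.mem_univ s))
  have h2 : ∑ t ∈ Finset.image f Finset.univ, (Finset.univ.filter fun s => f s = t).card
      = 2 * (Finset.image f Finset.univ).card := by
    rw [Finset.sum_congr rfl (fun t ht => ?_), Finset.sum_const, smul_eq_mul, mul_comm]
    rcases hf t with h' | h'
    · exact h'
    · exfalso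
      obtain ⟨s, -, rfl⟩ := Finset.mem_image.mp ht
      have hs : s ∈ Finset.univ.filter fun s' => f s' = f s := by simp
      rw [Finset.card_eq_zero] at h'
      simp [h'] at hs
  rw [h2, Finset.card_univ, Fintype.card_fin] at h
  omega

lemma peakless_comp_aux {m N n : ℕ} {φ : Fin m → Fin N} (hφ : StrictMono φ)
    (g : Fin n → Fin m) :
    Peakless (fun s => φ (g s)) ↔ Peakless g := by
  unfold Peakless IsPeak
  simp only [hφ.lt_iff_lt]

lemma ipp_comp_aux {m N n : ℕ} {φ : Fin m → Fin N} (hφ : Function.Injective φ)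
    (g : Fin n → Fin m) (hg : IsPairPartition g) :
    IsPairPartition (fun s => φ (g s)) := by
  intro t
  by_cases ht : ∃ u, φ u = t
  · obtain ⟨u, rfl⟩ := ht
    have : (Finset.univ.filter fun s => φ (g s) = φ u)
        = Finset.univ.filter fun s => g s = u := by
      ext s; simp [hφ.eq_iff]
    rw [this]; exact hg u
  · right
    rw [Finset.card_eq_zero, Finset.filter_eq_empty_iff]
    intro s _
    exact fun h => ht ⟨g s, h⟩

lemma symm_congr_aux {α : Type*} [LinearOrder α] {S T : Finset α} (h : S = T) {m : ℕ}
    (hS : S.card = m) (hT : T.card = m) (x : α) (hx : x ∈ S) (hx' : x ∈ T) :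
    (S.orderIsoOfFin hS).symm ⟨x, hx⟩ = (T.orderIsoOfFin hT).symm ⟨x, hx'⟩ := by
  subst h; rfl

theorem stmt2 (m N : ℕ) (hm : 1 ≤ m) (hN : m ≤ N) :
    Nat.card {f : Fin (2 * m) → Fin N // IsPairPartition f ∧ Peakless f} =
      N.choose m * Nat.card {f : Fin (2 * m) → Fin m // IsPairPartition f ∧ Peakless f} := by
  -- strict monotonicity of the coerced order iso
  have strict : ∀ (S : Finset (Fin N)) (hS : S.card = m),
      StrictMono (fun u => ((S.orderIsoOfFin hS u : Fin N))) := by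
    intro S hS a b hab
    exact Subtype.coe_lt_coe.mpr ((S.orderIsoOfFin hS).strictMono hab)
  have e : {f : Fin (2 * m) → Fin N // IsPairPartition f ∧ Peakless f} ≃
      {S : Finset (Fin N) // S.card = m} ×
        {g : Fin (2 * m) → Fin m // IsPairPartition g ∧ Peakless g} := by
    refine
      { toFun := fun p => by
          obtain ⟨f, hf1, hf2⟩ := p
          refine ⟨⟨Finset.image f Finset.univ, image_card_aux f hf1⟩,
            ⟨fun s => ((Finset.image f Finset.univ).orderIsoOfFin
              (image_card_aux f hf1)).symm
              ⟨f s, Finset.mem_image_of_mem f (Finset.mem_univ s)⟩, ?_, ?_⟩⟩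
          · -- g is a pair partition
            set S := Finset.image f Finset.univ
            set hS := image_card_aux f hf1
            intro u
            have key : (Finset.univ.filter fun s =>
                (S.orderIsoOfFin hS).symm ⟨f s, Finset.mem_image_of_mem f (Finset.mem_univ s)⟩ = u)
                = Finset.univ.filter fun s => f s = ((S.orderIsoOfFin hS) u : Fin N) := by
              ext s
              simp only [Finset.mem_filter, Finset.mem_univ, true_and]
              rw [OrderIso.symm_apply_eq]
              exact Subtype.ext_iff
            rw [key]
            exact hf1 _
          · -- g is peakless
            set S := Finset.image f Finset.univ
            set hS := image_card_aux f hf1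
            rw [← peakless_comp_aux (strict S hS)]
            have : (fun s => ((S.orderIsoOfFin hS)
                ((S.orderIsoOfFin hS).symm
                  ⟨f s, Finset.mem_image_of_mem f (Finset.mem_univ s)⟩) : Fin N)) = f := by
              funext s; simp
            rw [this]
            exact hf2
        invFun := fun p => by
          obtain ⟨⟨S, hS⟩, ⟨g, hg1, hg2⟩⟩ := p
          exact ⟨fun s => ((S.orderIsoOfFin hS) (g s) : Fin N),
            ipp_comp_aux (strict S hS).injective g hg1,
            (peakless_comp_aux (strict S hS) g).mpr hg2⟩
        left_inv := fun p => by
          obtain ⟨f, hf1, hf2⟩ := p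
          apply Subtype.ext
          funext s
          simp
        right_inv := fun p => by
          obtain ⟨⟨S, hS⟩, ⟨g, hg1, hg2⟩⟩ := p
          -- the inverse function applied
          set f : Fin (2 * m) → Fin N := fun s => ((S.orderIsoOfFin hS) (g s) : Fin N) with hfdef
          have hgsurj : Function.Surjective g := by
            have h1 : (Finset.image g Finset.univ).card = m := image_card_aux g hg1
            have h2 : Finset.image g Finset.univ = Finset.univ :=
              Finset.eq_univ_of_card _ (by simp [h1])
            intro u
            have : u ∈ Finset.image g Finset.univ := h2 ▸ Finset.mem_univ u
            obtain ⟨s, -, hs⟩ := Finset.mem_image.mp this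
            exact ⟨s, hs⟩
          have himg : Finset.image f Finset.univ = S := by
            ext t
            simp only [Finset.mem_image, Finset.mem_univ, true_and]
            constructor
            · rintro ⟨s, rfl⟩; exact ((S.orderIsoOfFin hS) (g s)).2
            · intro ht
              obtain ⟨s, hs⟩ := hgsurj ((S.orderIsoOfFin hS).symm ⟨t, ht⟩)
              refine ⟨s, ?_⟩
              rw [hfdef]
              simp [hs]
          refine Prod.ext (Subtype.ext himg) (Subtype.ext ?_)
          funext s
          show ((Finset.image f Finset.univ).orderIsoOfFin _).symm
              ⟨f s, Finset.mem_image_of_mem f (Finset.mem_univ s)⟩ = g s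
          rw [symm_congr_aux himg _ hS (f s) _ (((S.orderIsoOfFin hS) (g s)).2)]
          have : (⟨f s, ((S.orderIsoOfFin hS) (g s)).2⟩ : {x // x ∈ S})
              = (S.orderIsoOfFin hS) (g s) := rfl
          rw [this]
          simp }
  rw [Nat.card_congr e, Nat.card_prod, Nat.card_eq_fintype_card (α := {S : Finset (Fin N) // S.card = m}),
    Fintype.card_finset_len, Fintype.card_fin]
end

section
/- If f : Fin(2m) → Fin m has all fibers of size 0 or 2 and has no peak, then the two elements of the fiber over the maximum value attained by f are adjacent in Fin(2m), i.e., f⁻¹(max) = {i, i+1} for some i. -/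
theorem stmt8 (m : ℕ) (hm : 1 ≤ m) (f : Fin (2 * m) → Fin m)
    (hpp : IsPairPartition f) (hpl : Peakless f)
    (t : Fin m) (hmax : ∀ s, f s ≤ t) (hatt : ∃ s, f s = t) :
    ∃ i j : Fin (2 * m), (j : ℕ) = (i : ℕ) + 1 ∧
      (Finset.univ.filter fun s => f s = t) = {i, j} := by
  obtain ⟨i, hi⟩ := hatt
  -- i is not a peak, so some adjacent s' has f s' ≥ f i = t, hence f s' = t
  have hnp : ¬ IsPeak f i := fun h => hpl ⟨i, h⟩
  simp only [IsPeak, not_forall] at hnp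
  obtain ⟨s', hadj, hlt⟩ := hnp
  have hfs' : f s' = t := le_antisymm (hmax s') (by rw [← hi]; exact not_lt.mp hlt)
  have hne : s' ≠ i := by
    rcases hadj with h | h
    · exact h.ne'
    · exact h.ne
  have hne' : i ≠ s' := fun h => hne h.symm
  -- the fiber has card 2
  have hcard : (Finset.univ.filter fun s => f s = t).card = 2 := by
    rcases hpp t with h | h
    · exact h
    · exfalso
      have : i ∈ Finset.univ.filter fun s => f s = t := by simp [hi]
      rw [Finset.card_eq_zero] at h
      simp [h] at this
  have hsub : ({i, s'} : Finset (Fin (2 * m))) ⊆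
      Finset.univ.filter fun s => f s = t := by
    intro x hx
    simp only [Finset.mem_insert, Finset.mem_singleton] at hx
    rcases hx with rfl | rfl <;> simp [hi, hfs']
  have heq : (Finset.univ.filter fun s => f s = t) = {i, s'} := by
    refine (Finset.eq_of_subset_of_card_le hsub ?_).symm
    rw [Finset.card_insert_of_notMem (by simp [hne']), Finset.card_singleton, hcard]
  rcases hadj with h | h
  · refine ⟨i, s', ?_, heq⟩
    exact ((Order.covBy_iff_add_one_eq).mp (Fin.coe_covBy_iff.mpr h)).symm
  · refine ⟨s', i, ?_, by rw [heq, Finset.pair_comm]⟩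
    exact ((Order.covBy_iff_add_one_eq).mp (Fin.coe_covBy_iff.mpr h)).symm
end

section
/- Under the hypotheses of the singleton-condition limit theorem, the odd limiting moments vanish: if (aₙ) satisfies φ(aₙ) = 0, the singleton condition, and uniform boundedness of mixed moments, then for every odd m, lim_{N→∞} φ((N^{-1/2} Σ_{n=1}^N aₙ)^m) = 0. -/
/-!
Expand `(∑_{n<N} aₙ)^m` into the `N^m` words `a_{f 0} ⋯ a_{f (m-1)}`, `f : Fin m → Fin N`.
By the singleton condition and `φ(aₙ) = 0`, a word in which some index occurs exactly once has
expectation zero, so only maps whose fibres all have at least two points survive. Such a map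
takes at most `⌊m/2⌋` values, and there are at most `N^⌊m/2⌋ ⌊m/2⌋^m` of them, since each factors
through `Fin ⌊m/2⌋`. With the uniform bound `K` on the words, `‖φ((∑_{n<N} aₙ)^m)‖` is at most
`N^⌊m/2⌋ ⌊m/2⌋^m K`; for odd `m = 2r + 1` the normalisation `N^{-m/2}` leaves `r^m K / √N → 0`.
-/

open Finset Filter

theorem Finset.sum_pow_eq_sum_prod_ofFn {R ι : Type*} [Semiring R] [Fintype ι] (a : ι → R)
    (m : ℕ) : (∑ i, a i) ^ m = ∑ f : Fin m → ι, (List.ofFn fun j => a (f j)).prod := by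
  induction m with
  | zero => simp
  | succ m ih =>
    rw [pow_succ', ih, sum_mul_sum, ← Fintype.sum_prod_type',
      ← (Fin.consEquiv fun _ : Fin (m + 1) => ι).sum_comp]
    refine Fintype.sum_congr _ _ fun ⟨i, f⟩ => ?_
    simp [Fin.consEquiv, List.ofFn_succ]

theorem Finset.card_image_le_half_of_forall_exists_ne {α β : Type*} [Fintype α] [DecidableEq β]
    {f : α → β} (hf : ∀ s, ∃ j, f j = f s ∧ j ≠ s) :
    #(univ.image f) ≤ Fintype.card α / 2 := by
  classical
  have h : 2 * #(univ.image f) ≤ #(univ : Finset α) := by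
    refine mul_card_image_le_card _ _ fun b hb => ?_
    obtain ⟨s, -, rfl⟩ := mem_image.1 hb
    obtain ⟨j, hj, hjs⟩ := hf s
    calc 2 = #{j, s} := (card_pair hjs).symm
      _ ≤ _ := card_le_card fun x hx => by
        rcases mem_insert.1 hx with rfl | hx
        · simpa using hj
        · simp [mem_singleton.1 hx]
  rw [card_univ] at h
  omega

theorem Function.exists_comp_eq_of_card_image_le {α β : Type*} [Fintype α] [Nonempty α]
    [DecidableEq β] {f : α → β} {r : ℕ} (hr : #(univ.image f) ≤ r) :
    ∃ (g : Fin r → β) (h : α → Fin r), g ∘ h = f := by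
  let e : univ.image f ↪ Fin r := (univ.image f).equivFin.toEmbedding.trans (Fin.castLEEmb hr)
  refine ⟨extend e Subtype.val fun _ => f (Classical.arbitrary α),
    fun x => e ⟨f x, mem_image_of_mem f (mem_univ x)⟩, funext fun x => ?_⟩
  exact e.injective.extend_apply _ _ _

theorem Finset.card_filter_card_image_le {α β : Type*} [Fintype α] [Nonempty α] [DecidableEq α]
    [Fintype β] [DecidableEq β] (r : ℕ) :
    #{f : α → β | #(univ.image f) ≤ r} ≤ Fintype.card β ^ r * r ^ Fintype.card α := by
  calc #{f : α → β | #(univ.image f) ≤ r}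
      ≤ #(univ.image fun gh : (Fin r → β) × (α → Fin r) => gh.1 ∘ gh.2) := by
        refine card_le_card fun f hf => ?_
        obtain ⟨g, h, rfl⟩ := Function.exists_comp_eq_of_card_image_le (mem_filter.1 hf).2
        exact mem_image_of_mem _ (mem_univ (g, h))
    _ ≤ Fintype.card ((Fin r → β) × (α → Fin r)) := card_image_le
    _ = Fintype.card β ^ r * r ^ Fintype.card α := by simp

theorem norm_map_sum_range_pow_le {A E F : Type*} [Ring A] [SeminormedAddCommGroup E]
    [FunLike F A E] [AddMonoidHomClass F A E] (φ : F) (a : ℕ → A) {m : ℕ} {K : ℝ}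
    (hK : ∀ n : Fin m → ℕ, ‖φ (List.ofFn fun j => a (n j)).prod‖ ≤ K)
    (hvanish : ∀ n : Fin m → ℕ, (∃ s, ∀ j, n j = n s → j = s) →
      φ (List.ofFn fun j => a (n j)).prod = 0)
    (N : ℕ) : ‖φ ((∑ n ∈ range N, a n) ^ m)‖ ≤ (N : ℝ) ^ (m / 2) * ((m / 2 : ℕ) : ℝ) ^ m * K := by
  classical
  obtain rfl | hm := eq_or_ne m 0
  · simpa using hK finZeroElim
  have : NeZero m := ⟨hm⟩
  have hK0 : 0 ≤ K := (norm_nonneg _).trans (hK fun _ => 0)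
  have hword : ∀ f : Fin m → Fin N, ‖φ (List.ofFn fun j => a (f j)).prod‖ ≤
      if #(univ.image f) ≤ m / 2 then K else 0 := by
    intro f
    split_ifs with hf
    · exact hK _
    · obtain ⟨s, hs⟩ : ∃ s, ∀ j, f j = f s → j = s := by
        by_contra! h
        exact hf (by simpa using card_image_le_half_of_forall_exists_ne h)
      rw [hvanish (fun j => f j) ⟨s, fun j hj => hs j (Fin.ext hj)⟩, norm_zero]
  have hcard : (#{f : Fin m → Fin N | #(univ.image f) ≤ m / 2} : ℝ) ≤
      (N : ℝ) ^ (m / 2) * ((m / 2 : ℕ) : ℝ) ^ m := by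
    exact_mod_cast (card_filter_card_image_le (α := Fin m) (β := Fin N) (m / 2)).trans_eq
      (by simp)
  rw [← Fin.sum_univ_eq_sum_range, sum_pow_eq_sum_prod_ofFn, map_sum]
  calc _ ≤ ∑ f : Fin m → Fin N, ‖φ (List.ofFn fun j => a (f j)).prod‖ := norm_sum_le _ _
    _ ≤ ∑ f : Fin m → Fin N, if #(univ.image f) ≤ m / 2 then K else 0 :=
        sum_le_sum fun f _ => hword f
    _ = #{f : Fin m → Fin N | #(univ.image f) ≤ m / 2} * K := by
        rw [← sum_filter, sum_const, nsmul_eq_mul]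
    _ ≤ _ := by gcongr

open scoped ComplexOrder in
theorem stmt15_general {A : Type*} [Ring A] [Algebra ℂ A]
    (φ : A →ₗ[ℂ] ℂ)
    (a : ℕ → A)
    (hmean : ∀ i, φ (a i) = 0)
    -- uniform mixed moments
    (hunif : ∀ k : ℕ, ∃ K : ℝ, ∀ n : Fin k → ℕ,
      ‖φ (List.ofFn fun j => a (n j)).prod‖ ≤ K)
    -- singleton condition
    (hsing : ∀ (k : ℕ) (n : Fin k → ℕ) (s : Fin k),
      (∀ j, n j = n s → j = s) →
      φ (List.ofFn fun j => a (n j)).prod =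
        φ (a (n s)) * φ ((List.ofFn fun j => a (n j)).eraseIdx s).prod)
    (m : ℕ) (hm : Odd m) :
    Filter.Tendsto
      (fun N : ℕ =>
        φ ((((Real.sqrt N : ℂ))⁻¹ • ∑ n ∈ Finset.range N, a n) ^ m))
      Filter.atTop (nhds 0) := by
  obtain ⟨K, hK⟩ := hunif m
  obtain ⟨r, rfl⟩ := hm
  have hr : (2 * r + 1) / 2 = r := by omega
  have hbound := norm_map_sum_range_pow_le φ a hK
    (fun n ⟨s, hs⟩ => by rw [hsing _ n s hs, hmean, zero_mul])
  refine squeeze_zero_norm' (a := fun N : ℕ => r ^ (2 * r + 1) * K / √N) ?_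
    (tendsto_const_nhds.div_atTop (Real.tendsto_sqrt_atTop.comp tendsto_natCast_atTop_atTop))
  filter_upwards [eventually_gt_atTop 0] with N hN
  have hs : 0 < √(N : ℝ) := Real.sqrt_pos.2 (by exact_mod_cast hN)
  rw [smul_pow, map_smul, norm_smul, norm_pow, norm_inv, Complex.norm_real,
    Real.norm_of_nonneg hs.le]
  calc _ ≤ (√N)⁻¹ ^ (2 * r + 1) * ((N : ℝ) ^ r * (r : ℝ) ^ (2 * r + 1) * K) := by
        gcongr; simpa only [hr] using hbound N
    _ = _ := by
        rw [show (N : ℝ) ^ r = √N ^ (2 * r) by rw [pow_mul, Real.sq_sqrt (Nat.cast_nonneg N)],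
          inv_pow, pow_succ]
        field_simp [hs.ne']

open scoped ComplexOrder in
theorem stmt15 {A : Type*} [Ring A] [Algebra ℂ A] [StarRing A] [StarModule ℂ A]
    (φ : A →ₗ[ℂ] ℂ) (hφ1 : φ 1 = 1) (hφpos : ∀ x : A, 0 ≤ φ (star x * x))
    (a : ℕ → A)
    (hsa : ∀ i, star (a i) = a i)
    (hmean : ∀ i, φ (a i) = 0)
    (hvar : ∀ i, φ (a i ^ 2) = 1)
    -- uniform mixed moments
    (hunif : ∀ k : ℕ, ∃ K : ℝ, ∀ n : Fin k → ℕ,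
      ‖φ (List.ofFn fun j => a (n j)).prod‖ ≤ K)
    -- singleton condition
    (hsing : ∀ (k : ℕ) (n : Fin k → ℕ) (s : Fin k),
      (∀ j, n j = n s → j = s) →
      φ (List.ofFn fun j => a (n j)).prod =
        φ (a (n s)) * φ ((List.ofFn fun j => a (n j)).eraseIdx s).prod)
    (m : ℕ) (hm : Odd m) :
    Filter.Tendsto
      (fun N : ℕ =>
        φ ((((Real.sqrt N : ℂ))⁻¹ • ∑ n ∈ Finset.range N, a n) ^ m))
      Filter.atTop (nhds 0) :=
  stmt15_general φ a hmean hunif hsing m hm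
end
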